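/- arXiv:2312.14242 — 2 statements merged into one kernel-verified Lean document; each statement's English description precedes it below -/
import Mathlib

section
/- Let A be the N×N tridiagonal matrix over a commutative ring with constant diagonal entries x, constant subdiagonal entries y, and superdiagonal entries b₁,...,b_{N-1}. Then det(A) = Σ_{i=0}^{⌊N/2⌋} (−1)^i x^{N−2i} y^i ẽ_i(b₁,...,b_{N−1}), where ẽ_i is the 2-step elementary symmetric polynomial. -/
/-- The 2-step elementary symmetric polynomial `ẽ_k(x₁, …, x_n)`. -/
def etilde {R : Type*} [CommRing R] (n k : ℕ) (x : ℕ → R) : R :=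
  ∑ s ∈ ((Finset.Icc 1 n).powersetCard k).filter (fun s => ∀ i ∈ s, i + 1 ∉ s),
    ∏ j ∈ s, x j

/-- The `N × N` tridiagonal matrix with constant diagonal `x`, subdiagonal
entries `y₁, …, y_{N-1}` (entry `y k` at position `(k+1, k)`, 1-indexed) and
superdiagonal entries `b₁, …, b_{N-1}` (entry `b k` at position `(k, k+1)`). -/
def tridiag {R : Type*} [CommRing R] (N : ℕ) (x : R) (y b : ℕ → R) :
    Matrix (Fin N) (Fin N) R :=
  Matrix.of fun i j : Fin N =>
    if (i : ℕ) = (j : ℕ) then x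
    else if (j : ℕ) = (i : ℕ) + 1 then b ((i : ℕ) + 1)
    else if (i : ℕ) = (j : ℕ) + 1 then y ((j : ℕ) + 1)
    else 0

section Etilde
variable {R : Type*} [CommRing R] (b : ℕ → R)

lemma etilde_zero (n : ℕ) : etilde n 0 b = 1 := by
  simp [etilde, Finset.powersetCard_zero, Finset.filter_singleton]

lemma etilde_eq_zero {n k : ℕ} (h : n + 1 < 2 * k) : etilde n k b = 0 := by
  have he : ((Finset.Icc 1 n).powersetCard k).filter (fun s => ∀ i ∈ s, i + 1 ∉ s) = ∅ := by
    rw [Finset.eq_empty_iff_forall_notMem]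
    intro s hs
    simp only [Finset.mem_filter, Finset.mem_powersetCard] at hs
    obtain ⟨⟨hsub, hcard⟩, hcond⟩ := hs
    have hdisj : Disjoint s (s.image (· + 1)) := by
      rw [Finset.disjoint_right]
      intro a ha
      obtain ⟨j, hj, rfl⟩ := Finset.mem_image.mp ha
      exact hcond j hj
    have hunion : s ∪ s.image (· + 1) ⊆ Finset.Icc 1 (n+1) := by
      intro a ha
      rcases Finset.mem_union.mp ha with h1 | h2
      · have := hsub h1
        simp only [Finset.mem_Icc] at this ⊢
        omega
      · obtain ⟨j, hj, rfl⟩ := Finset.mem_image.mp h2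
        have := hsub hj
        simp only [Finset.mem_Icc] at this ⊢
        omega
    have hc := Finset.card_le_card hunion
    rw [Finset.card_union_of_disjoint hdisj,
      Finset.card_image_of_injective _ (add_left_injective 1), hcard, Nat.card_Icc] at hc
    omega
  rw [etilde, he, Finset.sum_empty]

lemma etilde_succ (n k : ℕ) :
    etilde (n+1) (k+1) b = etilde n (k+1) b + b (n+1) * etilde (n-1) k b := by
  classical
  rw [etilde, ← Finset.sum_filter_add_sum_filter_not _ (fun s => (n+1) ∉ s)]
  congr 1
  · -- sets not containing n+1
    rw [etilde]
    apply Finset.sum_congr _ (fun _ _ => rfl)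
    ext s
    simp only [Finset.mem_filter, Finset.mem_powersetCard]
    constructor
    · rintro ⟨⟨⟨hsub, hcard⟩, hcond⟩, hnot⟩
      refine ⟨⟨?_, hcard⟩, hcond⟩
      intro a ha
      have h1 := hsub ha
      simp only [Finset.mem_Icc] at h1 ⊢
      have : a ≠ n + 1 := fun h => hnot (h ▸ ha)
      omega
    · rintro ⟨⟨hsub, hcard⟩, hcond⟩
      have hnot : (n+1) ∉ s := by
        intro hmem
        have := hsub hmem
        simp only [Finset.mem_Icc] at this
        omega
      refine ⟨⟨⟨?_, hcard⟩, hcond⟩, hnot⟩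
      intro a ha
      have := hsub ha
      simp only [Finset.mem_Icc] at this ⊢
      omega
  · -- sets containing n+1
    rw [etilde, Finset.mul_sum]
    refine Finset.sum_bij' (fun s _ => s.erase (n+1)) (fun t _ => insert (n+1) t) ?_ ?_ ?_ ?_ ?_
    · intro s hs
      simp only [Finset.mem_filter, Finset.mem_powersetCard] at hs ⊢
      obtain ⟨⟨⟨hsub, hcard⟩, hcond⟩, hmem⟩ := hs
      rw [not_not] at hmem
      refine ⟨⟨?_, ?_⟩, ?_⟩
      · intro a ha
        rw [Finset.mem_erase] at ha
        obtain ⟨hane, has⟩ := ha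
        have h1 := hsub has
        simp only [Finset.mem_Icc] at h1 ⊢
        have hnn : a ≠ n := by
          rintro rfl
          exact hcond a has hmem
        omega
      · rw [Finset.card_erase_of_mem hmem, hcard]
        omega
      · intro i hi
        rw [Finset.mem_erase] at hi ⊢
        exact fun hcon => hcond i hi.2 hcon.2
    · intro t ht
      simp only [Finset.mem_filter, Finset.mem_powersetCard] at ht ⊢
      obtain ⟨⟨hsub, hcard⟩, hcond⟩ := ht
      have hnot : (n+1) ∉ t := by
        intro hmem
        have := hsub hmem
        simp only [Finset.mem_Icc] at this
        omega
      refine ⟨⟨⟨?_, ?_⟩, ?_⟩, not_not_intro (Finset.mem_insert_self _ _)⟩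
      · intro a ha
        rcases Finset.mem_insert.mp ha with rfl | has
        · simp only [Finset.mem_Icc]; omega
        · have := hsub has
          simp only [Finset.mem_Icc] at this ⊢
          omega
      · rw [Finset.card_insert_of_notMem hnot, hcard]
      · intro i hi
        rcases Finset.mem_insert.mp hi with rfl | his
        · intro hcon
          rcases Finset.mem_insert.mp hcon with h | h
          · omega
          · have := hsub h
            simp only [Finset.mem_Icc] at this
            omega
        · intro hcon
          rcases Finset.mem_insert.mp hcon with h | h
          · have := hsub his
            simp only [Finset.mem_Icc] at this
            omega
          · exact hcond i his h
    · intro s hs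
      simp only [Finset.mem_filter, not_not] at hs
      exact Finset.insert_erase hs.2
    · intro t ht
      simp only [Finset.mem_filter, Finset.mem_powersetCard] at ht
      obtain ⟨⟨hsub, hcard⟩, hcond⟩ := ht
      refine Finset.erase_insert ?_
      intro hmem
      have := hsub hmem
      simp only [Finset.mem_Icc] at this
      omega
    · intro s hs
      simp only [Finset.mem_filter, not_not] at hs
      exact (Finset.mul_prod_erase s b hs.2).symm
end Etilde

section Det
variable {R : Type*} [CommRing R] (x : R) (y b : ℕ → R)

lemma tridiag_apply (N : ℕ) (i j : Fin N) :
    tridiag N x y b i j =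
      if (i : ℕ) = (j : ℕ) then x
      else if (j : ℕ) = (i : ℕ) + 1 then b ((i : ℕ) + 1)
      else if (i : ℕ) = (j : ℕ) + 1 then y ((j : ℕ) + 1)
      else 0 := rfl

lemma tridiag_sub (N : ℕ) :
    (tridiag (N+1) x y b).submatrix Fin.castSucc Fin.castSucc = tridiag N x y b := by
  ext i j
  simp [tridiag, Matrix.submatrix_apply]

lemma det_tridiag_rec (N : ℕ) :
    (tridiag (N+2) x y b).det =
      x * (tridiag (N+1) x y b).det - b (N+1) * y (N+1) * (tridiag N x y b).det := by
  have hrow : ∀ i : Fin (N+1), (((Fin.last (N+1)).succAbove i : Fin (N+2)) : ℕ) = i := by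
    intro i; rw [Fin.succAbove_last]; simp
  have hcol : ∀ j : Fin (N+1),
      ((((Fin.last N).castSucc).succAbove j : Fin (N+2)) : ℕ)
        = if (j : ℕ) < N then (j : ℕ) else (j : ℕ) + 1 := by
    intro j
    by_cases h : (j : ℕ) < N
    · rw [Fin.succAbove_of_castSucc_lt, Fin.coe_castSucc, if_pos h]
      simp [Fin.lt_def, h]
    · rw [Fin.succAbove_of_le_castSucc, Fin.val_succ, if_neg h]
      simp [Fin.le_def]; omega
  have hcolN : ((((Fin.last N).castSucc).succAbove (Fin.last N) : Fin (N+2)) : ℕ) = N + 1 := by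
    rw [hcol]; simp
  have hcolC : ∀ j : Fin N,
      ((((Fin.last N).castSucc).succAbove j.castSucc : Fin (N+2)) : ℕ) = j := by
    intro j; rw [hcol]; simp [j.isLt]
  rw [Matrix.det_succ_row (tridiag (N+2) x y b) (Fin.last (N+1))]
  rw [Fin.sum_univ_castSucc, Fin.sum_univ_castSucc]
  have h0 : ∀ i : Fin N,
      (-1:R) ^ ((Fin.last (N+1) : ℕ) + ((i.castSucc.castSucc : Fin (N+2)) : ℕ)) *
        tridiag (N+2) x y b (Fin.last (N+1)) i.castSucc.castSucc *
        ((tridiag (N+2) x y b).submatrix (Fin.last (N+1)).succAbove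
          (i.castSucc.castSucc).succAbove).det = 0 := by
    intro i
    have hi : (i : ℕ) < N := i.isLt
    have : tridiag (N+2) x y b (Fin.last (N+1)) i.castSucc.castSucc = 0 := by
      rw [tridiag_apply]
      simp only [Fin.val_last, Fin.coe_castSucc]
      rw [if_neg (by omega), if_neg (by omega), if_neg (by omega)]
    rw [this]; ring
  rw [Finset.sum_eq_zero (fun i _ => h0 i), zero_add]
  have e2 : tridiag (N+2) x y b (Fin.last (N+1)) ((Fin.last N).castSucc : Fin (N+2)) = y (N+1) := by
    rw [tridiag_apply]
    simp only [Fin.val_last, Fin.coe_castSucc]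
    rw [if_neg (by omega), if_neg (by omega)]; simp
  have e3 : tridiag (N+2) x y b (Fin.last (N+1)) (Fin.last (N+1)) = x := by
    rw [tridiag_apply, if_pos (by omega)]
  have m3 : ((tridiag (N+2) x y b).submatrix (Fin.last (N+1)).succAbove
      (Fin.last (N+1)).succAbove).det = (tridiag (N+1) x y b).det := by
    rw [Fin.succAbove_last, tridiag_sub]
  have m2 : ((tridiag (N+2) x y b).submatrix (Fin.last (N+1)).succAbove
      (((Fin.last N).castSucc : Fin (N+2)).succAbove)).det
      = b (N+1) * (tridiag N x y b).det := by
    set M := (tridiag (N+2) x y b).submatrix (Fin.last (N+1)).succAbove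
      (((Fin.last N).castSucc : Fin (N+2)).succAbove) with hM
    rw [Matrix.det_succ_column M (Fin.last N), Fin.sum_univ_castSucc]
    have z : ∀ i : Fin N,
        (-1:R) ^ (((i.castSucc : Fin (N+1)) : ℕ) + ((Fin.last N : Fin (N+1)) : ℕ)) *
          M i.castSucc (Fin.last N) *
          (M.submatrix i.castSucc.succAbove (Fin.last N).succAbove).det = 0 := by
      intro i
      have hi : (i : ℕ) < N := i.isLt
      have : M i.castSucc (Fin.last N) = 0 := by
        rw [hM, Matrix.submatrix_apply, tridiag_apply, hrow, hcolN]
        simp only [Fin.coe_castSucc]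
        rw [if_neg (by omega), if_neg (by omega), if_neg (by omega)]
      rw [this]; ring
    rw [Finset.sum_eq_zero (fun i _ => z i), zero_add]
    have eb : M (Fin.last N) (Fin.last N) = b (N+1) := by
      rw [hM, Matrix.submatrix_apply, tridiag_apply, hrow, hcolN]
      simp only [Fin.val_last]
      rw [if_neg (by omega)]; simp
    have minner : (M.submatrix (Fin.last N).succAbove (Fin.last N).succAbove)
        = tridiag N x y b := by
      ext i j
      rw [Matrix.submatrix_apply, hM, Matrix.submatrix_apply, Fin.succAbove_last,
        Fin.succAbove_last, tridiag_apply, tridiag_apply]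
      simp only [Fin.coe_castSucc, hrow, hcolC]
    rw [eb, minner]
    have : (-1:R) ^ (((Fin.last N : Fin (N+1)) : ℕ) + ((Fin.last N : Fin (N+1)) : ℕ)) = 1 :=
      Even.neg_one_pow ⟨N, by simp⟩
    rw [this]; ring
  rw [e2, e3, m3, m2]
  simp only [Fin.val_last, Fin.coe_castSucc]
  have s2 : (-1:R) ^ ((N+1) + N) = -1 := Odd.neg_one_pow ⟨N, by ring⟩
  have s3 : (-1:R) ^ ((N+1) + (N+1)) = 1 := Even.neg_one_pow ⟨N+1, by ring⟩
  rw [s2, s3]; ring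
end Det

section SRec
variable {R : Type*} [CommRing R] (x y : R) (b : ℕ → R)

lemma S_rec (M : ℕ) :
    (∑ i ∈ Finset.range ((M+2)/2+1), (-1:R)^i * x^(M+2-2*i) * y^i * etilde (M+2-1) i b)
      = x * (∑ i ∈ Finset.range ((M+1)/2+1), (-1:R)^i * x^(M+1-2*i) * y^i * etilde (M+1-1) i b)
        - b (M+1) * y * (∑ i ∈ Finset.range (M/2+1), (-1:R)^i * x^(M-2*i) * y^i * etilde (M-1) i b) := by
  simp only [show M+2-1 = M+1 from rfl, show M+1-1 = M from rfl]
  have hr1 : (M+2)/2+1 = M/2+1+1 := by omega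
  have hsubset : Finset.range ((M+1)/2+1) ⊆ Finset.range (M/2+1+1) :=
    Finset.range_subset_range.mpr (by omega)
  have hzero : ∀ i ∈ Finset.range (M/2+1+1), i ∉ Finset.range ((M+1)/2+1) →
      (-1:R)^i * x^(M+1-2*i) * y^i * etilde M i b = 0 := by
    intro i hi hni
    simp only [Finset.mem_range] at hi hni
    rw [etilde_eq_zero b (by omega)]
    ring
  rw [hr1, Finset.sum_range_succ', Finset.sum_subset hsubset hzero, Finset.mul_sum,
    Finset.sum_range_succ' _ (M/2+1), Finset.mul_sum]
  have key : ∀ i ∈ Finset.range (M/2+1),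
      (-1:R)^(i+1) * x^(M+2-2*(i+1)) * y^(i+1) * etilde (M+1) (i+1) b
        = x * ((-1:R)^(i+1) * x^(M+1-2*(i+1)) * y^(i+1) * etilde M (i+1) b)
          - b (M+1) * y * ((-1:R)^i * x^(M-2*i) * y^i * etilde (M-1) i b) := by
    intro i hi
    simp only [Finset.mem_range] at hi
    rw [show M+2-2*(i+1) = M-2*i from by omega, etilde_succ]
    rcases Nat.lt_or_ge (2*i) M with h | h
    · rw [show M-2*i = (M+1-2*(i+1))+1 from by omega, pow_succ x (M+1-2*(i+1)),
        pow_succ (-1:R) i, pow_succ y i]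
      ring
    · rw [etilde_eq_zero b (show M + 1 < 2*(i+1) from by omega),
        pow_succ (-1:R) i, pow_succ y i]
      ring
  have hsc := Finset.sum_congr rfl key
  rw [hsc]
  have hc : (-1:R)^0 * x^(M+2-2*0) * y^0 * etilde (M+1) 0 b
      = x * ((-1:R)^0 * x^(M+1-2*0) * y^0 * etilde M 0 b) := by
    rw [etilde_zero, etilde_zero, show M+2-2*0 = (M+1)+1 from rfl, show M+1-2*0 = M+1 from rfl,
      pow_succ x (M+1)]
    ring
  rw [Finset.sum_sub_distrib, hc]
  ring
end SRec

/-- Determinant of a tridiagonal matrix with constant diagonal `x` and constant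
subdiagonal `y`, in terms of 2-step elementary symmetric polynomials of the
superdiagonal entries. -/
theorem det_tridiag_etilde {R : Type*} [CommRing R] (N : ℕ) (x y : R) (b : ℕ → R) :
    (tridiag N x (fun _ => y) b).det =
      ∑ i ∈ Finset.range (N / 2 + 1),
        (-1 : R) ^ i * x ^ (N - 2 * i) * y ^ i * etilde (N - 1) i b := by
  induction N using Nat.strong_induction_on with
  | _ N ih =>
    rcases N with _ | _ | M
    · simp [Matrix.det_isEmpty, etilde_zero]
    · rw [Matrix.det_fin_one]
      simp [tridiag, etilde_zero]
    · rw [det_tridiag_rec, ih (M+1) (by omega), ih M (by omega)]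
      exact (S_rec x y b M).symm
end

section
/- For coprime positive integers P, Q with Q odd and P even, ∏_{j=1}^{Q} 2cos(jπP/Q + κ) = (−1)^{P(Q+1)/2} · 2cos(Qκ) for all real κ. -/
/-!
Write `P = 2m`, so that `ζ = exp(iπP/Q)` is a primitive `Q`-th root of unity and, with
`w = exp(iκ)`, the `j`-th factor is `ζʲw + (ζʲw)⁻¹`. Pulling `ζ⁻ʲ` out of each factor leaves
`∏ (w⁻¹ + (ζ²)ʲ w) = w⁻ᵠ + wᵠ` by the factorisation of `Xᵠ + Yᵠ` over the `Q`-th roots of unity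
(`Q` odd, so `ζ²` is again primitive), while `∏ ζ⁻ʲ = ζ^(-Q(Q-1)/2) = 1`. The sign is `+1`
because `4 ∣ P(Q+1)`.
-/

open Finset

theorem prod_range_pow_of_odd {M : Type*} [CommMonoid M] {ζ : M} {n : ℕ} (hζ : ζ ^ n = 1)
    (hn : Odd n) : ∏ i ∈ range n, ζ ^ i = 1 := by
  obtain ⟨k, rfl⟩ := hn
  have hsum : ∑ i ∈ range (2 * k + 1), i = (2 * k + 1) * k := by
    have := sum_range_id_mul_two (2 * k + 1)
    rw [Nat.add_sub_cancel] at this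
    linarith
  rw [prod_pow_eq_pow_sum, hsum, pow_mul, hζ, one_pow]

namespace IsPrimitiveRoot

variable {n : ℕ}

open Polynomial in
theorem prod_range_add_pow_mul {R : Type*} [CommRing R] [IsDomain R] {ζ : R}
    (hζ : IsPrimitiveRoot ζ n) (hn : Odd n) (x y : R) :
    ∏ i ∈ range n, (x + ζ ^ i * y) = x ^ n + y ^ n := by
  have h := congrArg (eval x) (X_pow_sub_C_eq_prod hζ hn.pos (rfl : (-y) ^ n = _))
  simp only [eval_sub, eval_pow, eval_X, eval_C, eval_prod, hn.neg_pow] at h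
  simpa using h.symm

theorem prod_range_pow_mul_add_inv {K : Type*} [Field K] {ζ : K}
    (hζ : IsPrimitiveRoot ζ n) (hn : Odd n) (x : K) :
    ∏ i ∈ range n, (ζ ^ i * x + (ζ ^ i * x)⁻¹) = x ^ n + (x ^ n)⁻¹ := by
  have hterm : ∀ i ∈ range n,
      ζ ^ i * x + (ζ ^ i * x)⁻¹ = (ζ ^ i)⁻¹ * (x⁻¹ + (ζ ^ 2) ^ i * x) := by
    intro i _
    field_simp
    ring
  rw [prod_congr rfl hterm, prod_mul_distrib, prod_inv_distrib,
    prod_range_pow_of_odd hζ.pow_eq_one hn,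
    (hζ.pow_of_coprime 2 hn.coprime_two_left).prod_range_add_pow_mul hn, inv_one, one_mul,
    inv_pow, add_comm]

end IsPrimitiveRoot

open Complex in
theorem prod_two_cos_mul_add {n : ℕ} (hn : Odd n) {θ : ℝ}
    (hθ : IsPrimitiveRoot (exp (θ * I)) n) (κ : ℝ) :
    ∏ j ∈ Icc 1 n, 2 * Real.cos (j * θ + κ) = 2 * Real.cos (n * κ) := by
  have hcos (t : ℝ) : ((2 * Real.cos t : ℝ) : ℂ) = exp (t * I) + (exp (t * I))⁻¹ := by
    rw [← exp_neg, ← neg_mul]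
    push_cast
    exact two_cos _
  have hexp (j : ℕ) : exp ((j * θ + κ : ℝ) * I) = exp (θ * I) ^ j * exp (κ * I) := by
    rw [← exp_nat_mul, ← exp_add]
    push_cast
    ring_nf
  have hshift (k : ℕ) : exp (θ * I) ^ (1 + k) * exp (κ * I) =
      exp (θ * I) ^ k * (exp (θ * I) * exp (κ * I)) := by
    ring
  have hpow : exp ((n * κ : ℝ) * I) = exp (κ * I) ^ n := by
    rw [← exp_nat_mul]
    push_cast
    ring_nf
  apply ofReal_injective
  rw [ofReal_prod, prod_congr rfl fun j _ => hcos _, hcos]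
  simp only [hexp]
  rw [← Ico_add_one_right_eq_Icc, prod_Ico_eq_prod_range, Nat.add_sub_cancel]
  simp only [hshift]
  rw [hθ.prod_range_pow_mul_add_inv hn, mul_pow, hθ.pow_eq_one, one_mul, hpow]

theorem prod_two_cos_odd_even_general (P Q : ℕ)
    (hco : Nat.Coprime P Q) (hQodd : Odd Q) (hPeven : Even P) (κ : ℝ) :
    ∏ j ∈ Finset.Icc 1 Q,
        (2 * Real.cos ((j : ℝ) * Real.pi * (P : ℝ) / (Q : ℝ) + κ)) =
      (-1 : ℝ) ^ (P * (Q + 1) / 2) * (2 * Real.cos ((Q : ℝ) * κ)) := by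
  have hsign : (-1 : ℝ) ^ (P * (Q + 1) / 2) = 1 := by
    rw [Nat.mul_div_assoc _ (even_iff_two_dvd.mp hQodd.add_one)]
    exact (hPeven.mul_right _).neg_one_pow
  obtain ⟨m, hm⟩ := hPeven
  have hroot : IsPrimitiveRoot (Complex.exp ((Real.pi * P / Q : ℝ) * Complex.I)) Q := by
    convert Complex.isPrimitiveRoot_exp_of_coprime m Q hQodd.pos.ne'
      (Nat.Coprime.coprime_dvd_left (Dvd.intro_left 2 ((two_mul m).trans hm.symm)) hco) using 2
    push_cast [hm]
    ring
  rw [hsign, one_mul, ← prod_two_cos_mul_add hQodd hroot κ]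
  refine prod_congr rfl fun j _ => ?_
  ring_nf

/-- For coprime `P`, `Q` with `Q` odd and `P` even,
`∏_{j=1}^{Q} 2cos(jπP/Q + κ) = (−1)^{P(Q+1)/2} · 2cos(Qκ)`. -/
theorem prod_two_cos_odd_even (P Q : ℕ) (hP : 0 < P) (hQ : 0 < Q)
    (hco : Nat.Coprime P Q) (hQodd : Odd Q) (hPeven : Even P) (κ : ℝ) :
    ∏ j ∈ Finset.Icc 1 Q,
        (2 * Real.cos ((j : ℝ) * Real.pi * (P : ℝ) / (Q : ℝ) + κ)) =
      (-1 : ℝ) ^ (P * (Q + 1) / 2) * (2 * Real.cos ((Q : ℝ) * κ)) :=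
  prod_two_cos_odd_even_general P Q hco hQodd hPeven κ
end
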